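/- Let μ > 0 and h ∈ ℝ, and let H̃(Q,P) = (Q₁² + μQ₂²)·((P₁² + P₂²) − 2h)²/4 on ℝ² × ℝ². Let (Q,P) : J → ℝ² × ℝ² be a C² curve on an open interval J solving Hamilton's equations for H̃, and assume P₁(s)² + P₂(s)² ≠ 2h for all s ∈ J. Then the curve x(s) = (x₁(s), x₂(s)) := (P₁(s), P₂(s)) satisfies the Euler–Lagrange equations of the Lagrangian L(x, ẋ) = (ẋ₁² + ẋ₂²/μ)/((x₁² + x₂² − 2h)²), namely: d/ds [ 2x₁'(s)/((x₁(s)² + x₂(s)² − 2h)²) ] = −4x₁(s)·(x₁'(s)² + x₂'(s)²/μ)/((x₁(s)² + x₂(s)² − 2h)³) and d/ds [ 2x₂'(s)/(μ(x₁(s)² + x₂(s)² − 2h)²) ] = −4x₂(s)·(x₁'(s)² + x₂'(s)²/μ)/((x₁(s)² + x₂(s)² − 2h)³) for all s ∈ J. In other words, P(s) is a geodesic of the Riemannian metric g = (2/(x² + y² − 2h)²)·diag(1, 1/μ) on the region where x² + y² ≠ 2h. -/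

import Mathlib

/-!
Along the flow, `P' = -(Q₁, μ Q₂) R² / 2` with `R = |P|² - 2h`, so the Lagrangian momenta
`(2P₁'/R², 2P₂'/(μR²))` of the curve `P` are exactly `-Q`, and the kinetic term is
`P₁'² + P₂'²/μ = (Q₁² + μQ₂²) R⁴ / 4`. The Euler–Lagrange equations thus reduce to the
Hamilton equations `Qᵢ' = (Q₁² + μQ₂²) R Pᵢ` for the positions.
-/

/-- A curve `(q, p)` on the set `I ⊆ ℝ` solves Hamilton's equations for the
Hamiltonian `K : ℝ² × ℝ² → ℝ` (with `ℝ²` modelled by `ℝ × ℝ`):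
`qᵢ' = ∂K/∂pᵢ` and `pᵢ' = −∂K/∂qᵢ` on `I`, `i = 1, 2`. -/
def IsHamSol2 (K : (ℝ × ℝ) × (ℝ × ℝ) → ℝ) (q p : ℝ → ℝ × ℝ) (I : Set ℝ) : Prop :=
  ∀ t ∈ I,
    HasDerivAt (fun t' => (q t').1) (fderiv ℝ K (q t, p t) (((0, 0), (1, 0)))) t ∧
    HasDerivAt (fun t' => (q t').2) (fderiv ℝ K (q t, p t) (((0, 0), (0, 1)))) t ∧
    HasDerivAt (fun t' => (p t').1) (-(fderiv ℝ K (q t, p t) (((1, 0), (0, 0))))) t ∧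
    HasDerivAt (fun t' => (p t').2) (-(fderiv ℝ K (q t, p t) (((0, 1), (0, 0))))) t

open Filter Topology

noncomputable def akpHamiltonian (μ h : ℝ) (z : (ℝ × ℝ) × (ℝ × ℝ)) : ℝ :=
  (z.1.1 ^ 2 + μ * z.1.2 ^ 2) * ((z.2.1 ^ 2 + z.2.2 ^ 2) - 2 * h) ^ 2 / 4

theorem fderiv_akpHamiltonian_apply (μ h : ℝ) (z v : (ℝ × ℝ) × (ℝ × ℝ)) :
    fderiv ℝ (akpHamiltonian μ h) z v =
      (z.1.1 * v.1.1 + μ * z.1.2 * v.1.2) * (z.2.1 ^ 2 + z.2.2 ^ 2 - 2 * h) ^ 2 / 2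
        + (z.1.1 ^ 2 + μ * z.1.2 ^ 2) * (z.2.1 ^ 2 + z.2.2 ^ 2 - 2 * h)
          * (z.2.1 * v.2.1 + z.2.2 * v.2.2) := by
  unfold akpHamiltonian
  simp (disch := fun_prop) only [div_eq_mul_inv, fderiv_mul_const, fderiv_fun_mul,
    fderiv_fun_const, Pi.zero_apply, smul_zero, fderiv_fun_pow, Nat.add_one_sub_one, pow_one,
    nsmul_eq_mul, Nat.cast_ofNat, fderiv_fun_sub, fderiv_fun_add, fderiv.fst, fderiv.snd,
    fderiv_fun_id, ContinuousLinearMap.comp_id, add_zero, sub_zero, smul_add, add_apply,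
    smul_apply, ContinuousLinearMap.comp_apply, ContinuousLinearMap.coe_snd',
    ContinuousLinearMap.coe_fst', smul_eq_mul]
  ring

namespace IsHamSol2

variable {μ h : ℝ} {Q P : ℝ → ℝ × ℝ} {J : Set ℝ} {s : ℝ}
  (hsol : IsHamSol2 (akpHamiltonian μ h) Q P J) (hs : s ∈ J)
include hsol hs

theorem akp_hasDerivAt_position_fst :
    HasDerivAt (fun u => (Q u).1) (((Q s).1 ^ 2 + μ * (Q s).2 ^ 2)
      * ((P s).1 ^ 2 + (P s).2 ^ 2 - 2 * h) * (P s).1) s := by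
  simpa [fderiv_akpHamiltonian_apply] using (hsol s hs).1

theorem akp_hasDerivAt_position_snd :
    HasDerivAt (fun u => (Q u).2) (((Q s).1 ^ 2 + μ * (Q s).2 ^ 2)
      * ((P s).1 ^ 2 + (P s).2 ^ 2 - 2 * h) * (P s).2) s := by
  simpa [fderiv_akpHamiltonian_apply] using (hsol s hs).2.1

theorem akp_deriv_momentum_fst :
    deriv (fun u => (P u).1) s = -((Q s).1 * ((P s).1 ^ 2 + (P s).2 ^ 2 - 2 * h) ^ 2 / 2) := by
  simpa [fderiv_akpHamiltonian_apply] using (hsol s hs).2.2.1.deriv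

theorem akp_deriv_momentum_snd :
    deriv (fun u => (P u).2) s
      = -(μ * (Q s).2 * ((P s).1 ^ 2 + (P s).2 ^ 2 - 2 * h) ^ 2 / 2) := by
  simpa [fderiv_akpHamiltonian_apply, mul_assoc] using (hsol s hs).2.2.2.deriv

theorem akp_kinetic_eq :
    deriv (fun u => (P u).1) s ^ 2 + deriv (fun u => (P u).2) s ^ 2 / μ
      = ((Q s).1 ^ 2 + μ * (Q s).2 ^ 2) * ((P s).1 ^ 2 + (P s).2 ^ 2 - 2 * h) ^ 4 / 4 := by
  rw [hsol.akp_deriv_momentum_fst hs, hsol.akp_deriv_momentum_snd hs]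
  field_simp
  ring

variable (hJ : IsOpen J) (hP : ∀ u ∈ J, (P u).1 ^ 2 + (P u).2 ^ 2 ≠ 2 * h)
include hJ hP

theorem akp_momentum_fst_eventuallyEq :
    (fun u => 2 * deriv (fun u => (P u).1) u / ((P u).1 ^ 2 + (P u).2 ^ 2 - 2 * h) ^ 2)
      =ᶠ[𝓝 s] fun u => -(Q u).1 := by
  filter_upwards [hJ.mem_nhds hs] with u hu
  have hR : (P u).1 ^ 2 + (P u).2 ^ 2 - 2 * h ≠ 0 := sub_ne_zero.mpr (hP u hu)
  rw [hsol.akp_deriv_momentum_fst hu]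
  field_simp

theorem akp_momentum_snd_eventuallyEq (hμ : μ ≠ 0) :
    (fun u => 2 * deriv (fun u => (P u).2) u / (μ * ((P u).1 ^ 2 + (P u).2 ^ 2 - 2 * h) ^ 2))
      =ᶠ[𝓝 s] fun u => -(Q u).2 := by
  filter_upwards [hJ.mem_nhds hs] with u hu
  have hR : (P u).1 ^ 2 + (P u).2 ^ 2 - 2 * h ≠ 0 := sub_ne_zero.mpr (hP u hu)
  rw [hsol.akp_deriv_momentum_snd hu]
  field_simp

end IsHamSol2

theorem akp_momenta_satisfy_euler_lagrange_general
    (μ h : ℝ) (hμ : 0 < μ)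
    (J : Set ℝ) (hJ : IsOpen J)
    (Q P : ℝ → ℝ × ℝ)
    (hsol : IsHamSol2
      (fun z => (z.1.1 ^ 2 + μ * z.1.2 ^ 2)
        * ((z.2.1 ^ 2 + z.2.2 ^ 2) - 2 * h) ^ 2 / 4) Q P J)
    (hP : ∀ s ∈ J, (P s).1 ^ 2 + (P s).2 ^ 2 ≠ 2 * h) :
    ∀ s ∈ J,
      HasDerivAt
        (fun s' => 2 * deriv (fun u => (P u).1) s'
          / ((P s').1 ^ 2 + (P s').2 ^ 2 - 2 * h) ^ 2)
        (-4 * (P s).1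
          * ((deriv (fun u => (P u).1) s) ^ 2 + (deriv (fun u => (P u).2) s) ^ 2 / μ)
          / ((P s).1 ^ 2 + (P s).2 ^ 2 - 2 * h) ^ 3) s ∧
      HasDerivAt
        (fun s' => 2 * deriv (fun u => (P u).2) s'
          / (μ * ((P s').1 ^ 2 + (P s').2 ^ 2 - 2 * h) ^ 2))
        (-4 * (P s).2
          * ((deriv (fun u => (P u).1) s) ^ 2 + (deriv (fun u => (P u).2) s) ^ 2 / μ)
          / ((P s).1 ^ 2 + (P s).2 ^ 2 - 2 * h) ^ 3) s := by
  change IsHamSol2 (akpHamiltonian μ h) Q P J at hsol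
  intro s hs
  have hR : (P s).1 ^ 2 + (P s).2 ^ 2 - 2 * h ≠ 0 := sub_ne_zero.mpr (hP s hs)
  rw [hsol.akp_kinetic_eq hs]
  constructor
  · refine ((hsol.akp_hasDerivAt_position_fst hs).neg.congr_of_eventuallyEq
      (hsol.akp_momentum_fst_eventuallyEq hs hJ hP)).congr_deriv ?_
    field_simp
  · refine ((hsol.akp_hasDerivAt_position_snd hs).neg.congr_of_eventuallyEq
      (hsol.akp_momentum_snd_eventuallyEq hs hJ hP hμ.ne')).congr_deriv ?_
    field_simp

/-- **The momenta of the Hamiltonian flow of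
`H̃(Q,P) = (Q₁² + μQ₂²)((P₁² + P₂²) − 2h)²/4` satisfy the Euler–Lagrange
equations of the Lagrangian
`L(x, ẋ) = (ẋ₁² + ẋ₂²/μ)/((x₁² + x₂² − 2h)²)`,**
i.e. `x(s) := P(s)` is a geodesic of the metric
`g = (2/(x² + y² − 2h)²)·diag(1, 1/μ)` on the region `x² + y² ≠ 2h`. -/
theorem akp_momenta_satisfy_euler_lagrange
    (μ h : ℝ) (hμ : 0 < μ)
    (J : Set ℝ) (hJ : IsOpen J) (hJconn : J.OrdConnected)
    (Q P : ℝ → ℝ × ℝ)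
    (hC2 : ContDiffOn ℝ 2 (fun s => (Q s, P s)) J)
    (hsol : IsHamSol2
      (fun z => (z.1.1 ^ 2 + μ * z.1.2 ^ 2)
        * ((z.2.1 ^ 2 + z.2.2 ^ 2) - 2 * h) ^ 2 / 4) Q P J)
    (hP : ∀ s ∈ J, (P s).1 ^ 2 + (P s).2 ^ 2 ≠ 2 * h) :
    ∀ s ∈ J,
      HasDerivAt
        (fun s' => 2 * deriv (fun u => (P u).1) s'
          / ((P s').1 ^ 2 + (P s').2 ^ 2 - 2 * h) ^ 2)
        (-4 * (P s).1
          * ((deriv (fun u => (P u).1) s) ^ 2 + (deriv (fun u => (P u).2) s) ^ 2 / μ)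
          / ((P s).1 ^ 2 + (P s).2 ^ 2 - 2 * h) ^ 3) s ∧
      HasDerivAt
        (fun s' => 2 * deriv (fun u => (P u).2) s'
          / (μ * ((P s').1 ^ 2 + (P s').2 ^ 2 - 2 * h) ^ 2))
        (-4 * (P s).2
          * ((deriv (fun u => (P u).1) s) ^ 2 + (deriv (fun u => (P u).2) s) ^ 2 / μ)
          / ((P s).1 ^ 2 + (P s).2 ^ 2 - 2 * h) ^ 3) s :=
  akp_momenta_satisfy_euler_lagrange_general μ h hμ J hJ Q P hsol hP
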